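/- arXiv:1910.03036 — 5 statements merged into one kernel-verified Lean document; each statement's English description precedes it below -/
import Mathlib

section
/- Define A(n) = 0 for n = 0 and A(n) = e^{2 m^{3/2}} m^{-1/4} whenever m^3 \le n < (m+1)^3 with m \ge 1. Then \limsup_{n \to \infty} n^{1/12} e^{-2\sqrt{n}} A(n) = 1. -/
open Filter Topology Set

-- log inequality: for 1 ≤ a ≤ b with √b ≤ 12a, (1/12)(log b − log a) ≤ 2(√b − √a)
lemma key_log (a b : ℝ) (ha : 1 ≤ a) (hab : a ≤ b) (hsb : Real.sqrt b ≤ 12 * a) :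
    (1/12) * (Real.log b - Real.log a) ≤ 2 * (Real.sqrt b - Real.sqrt a) := by
  have ha0 : 0 < a := lt_of_lt_of_le one_pos ha
  have hb0 : 0 < b := lt_of_lt_of_le ha0 hab
  have hsa : 0 < Real.sqrt a := Real.sqrt_pos.mpr ha0
  have hsb0 : 0 < Real.sqrt b := Real.sqrt_pos.mpr hb0
  have h1 : Real.log b - Real.log a ≤ (b - a) / a := by
    rw [← Real.log_div (ne_of_gt hb0) (ne_of_gt ha0)]
    have := Real.log_le_sub_one_of_pos (div_pos hb0 ha0)
    calc Real.log (b/a) ≤ b/a - 1 := this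
      _ = (b - a)/a := by field_simp
  have h2 : (b - a) / Real.sqrt b ≤ 2 * (Real.sqrt b - Real.sqrt a) := by
    have hh : (Real.sqrt b - Real.sqrt a) * (Real.sqrt b + Real.sqrt a) = b - a := by
      have := Real.sq_sqrt hb0.le
      have := Real.sq_sqrt ha0.le
      nlinarith [Real.sq_sqrt hb0.le, Real.sq_sqrt ha0.le]
    rw [div_le_iff₀ hsb0, ← hh]
    have hd : 0 ≤ Real.sqrt b - Real.sqrt a := by
      simp [sub_nonneg, Real.sqrt_le_sqrt hab]
    nlinarith [hsa.le]
  calc (1/12) * (Real.log b - Real.log a) ≤ (1/12) * ((b - a)/a) := by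
        have : Real.log b - Real.log a ≤ (b-a)/a := h1
        nlinarith
    _ = (b - a) / (12 * a) := by ring
    _ ≤ (b - a) / Real.sqrt b := by
        rw [div_le_div_iff₀ (by linarith) hsb0]
        nlinarith [sub_nonneg.mpr hab, hsb0.le]
    _ ≤ 2 * (Real.sqrt b - Real.sqrt a) := h2

-- upper bound for one block
lemma key_upper (μ x : ℝ) (hμ : 1 ≤ μ) (hx : μ^3 ≤ x) (hx8 : x ≤ 8 * μ^3) :
    x ^ ((1:ℝ)/12) * Real.exp (-2 * Real.sqrt x) *
      (Real.exp (2 * μ ^ ((3:ℝ)/2)) * μ ^ (-(1/4) : ℝ)) ≤ 1 := by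
  have hμ0 : 0 < μ := lt_of_lt_of_le one_pos hμ
  have ha : 1 ≤ μ^3 := one_le_pow₀ hμ
  have hx0 : 0 < x := lt_of_lt_of_le (lt_of_lt_of_le one_pos ha) hx
  -- μ^(3/2) = sqrt (μ^3)
  have h32 : μ ^ ((3:ℝ)/2) = Real.sqrt (μ^3) := by
    rw [Real.sqrt_eq_rpow, ← Real.rpow_natCast μ 3, ← Real.rpow_mul hμ0.le]
    norm_num
  have hlog : μ ^ (-(1/4) : ℝ) = Real.exp (-(1/4) * Real.log μ) := by
    rw [Real.rpow_def_of_pos hμ0, mul_comm]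
  have hxp : x ^ ((1:ℝ)/12) = Real.exp ((1/12) * Real.log x) := by
    rw [Real.rpow_def_of_pos hx0, mul_comm]
  rw [hxp, h32, hlog, ← Real.exp_add, ← Real.exp_add, ← Real.exp_add]
  rw [Real.exp_le_one_iff]
  have hsb : Real.sqrt x ≤ 12 * μ^3 := by
    have h1 : Real.sqrt x ≤ Real.sqrt (8 * μ^3) := Real.sqrt_le_sqrt hx8
    have h2 : Real.sqrt (8 * μ^3) ≤ 3 * Real.sqrt (μ^3) := by
      rw [show (3:ℝ) * Real.sqrt (μ^3) = Real.sqrt (9 * μ^3) by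
        rw [Real.sqrt_mul (by norm_num), show (9:ℝ) = 3^2 by norm_num, Real.sqrt_sq (by norm_num)]]
      exact Real.sqrt_le_sqrt (by nlinarith)
    have h3 : Real.sqrt (μ^3) ≤ μ^3 := by
      nlinarith [Real.sq_sqrt (by positivity : (0:ℝ) ≤ μ^3), Real.sqrt_nonneg (μ^3),
        Real.sqrt_le_sqrt ha, Real.sqrt_one]
    nlinarith
  have hk := key_log (μ^3) x ha hx hsb
  have hla : Real.log (μ^3) = 3 * Real.log μ := by
    rw [Real.log_pow]; norm_num
  rw [hla] at hk
  nlinarith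

lemma cast_rpow_cube (m : ℕ) (hm : 1 ≤ m) :
    ((m^3 : ℕ) : ℝ) ^ ((1:ℝ)/12) * Real.exp (-2 * Real.sqrt ((m^3 : ℕ):ℝ)) *
      (Real.exp (2 * (m:ℝ) ^ ((3:ℝ)/2)) * (m:ℝ) ^ (-(1/4) : ℝ)) = 1 := by
  have hm0 : (0:ℝ) < m := by exact_mod_cast hm
  have h32 : (m:ℝ) ^ ((3:ℝ)/2) = Real.sqrt ((m:ℝ)^3) := by
    rw [Real.sqrt_eq_rpow, ← Real.rpow_natCast (m:ℝ) 3, ← Real.rpow_mul hm0.le]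
    norm_num
  have hc : ((m^3 : ℕ) : ℝ) = (m:ℝ)^3 := by push_cast; ring
  have h14 : ((m:ℝ)^3) ^ ((1:ℝ)/12) = (m:ℝ) ^ ((1:ℝ)/4) := by
    rw [← Real.rpow_natCast (m:ℝ) 3, ← Real.rpow_mul hm0.le]
    norm_num
  rw [hc, h14, h32]
  have e1 : Real.exp (-2 * Real.sqrt ((m:ℝ)^3)) * Real.exp (2 * Real.sqrt ((m:ℝ)^3)) = 1 := by
    rw [← Real.exp_add, show -2 * Real.sqrt ((m:ℝ)^3) + 2 * Real.sqrt ((m:ℝ)^3) = 0 by ring,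
      Real.exp_zero]
  have e2 : (m:ℝ) ^ ((1:ℝ)/4) * (m:ℝ) ^ (-(1/4):ℝ) = 1 := by
    rw [← Real.rpow_add hm0]; norm_num
  calc (m:ℝ) ^ ((1:ℝ)/4) * Real.exp (-2 * Real.sqrt ((m:ℝ)^3)) *
        (Real.exp (2 * Real.sqrt ((m:ℝ)^3)) * (m:ℝ) ^ (-(1/4):ℝ))
      = ((m:ℝ) ^ ((1:ℝ)/4) * (m:ℝ) ^ (-(1/4):ℝ)) *
        (Real.exp (-2 * Real.sqrt ((m:ℝ)^3)) * Real.exp (2 * Real.sqrt ((m:ℝ)^3))) := by ring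
    _ = 1 := by rw [e1, e2, one_mul]

/-- For the Avakumović–Karamata coefficients, `limsup_{n→∞} n^{1/12} e^{-2√n} A(n) = 1`. -/
theorem AK_limsup (A : ℕ → ℝ) (hA0 : A 0 = 0)
    (hA : ∀ m n : ℕ, 1 ≤ m → m ^ 3 ≤ n → n < (m + 1) ^ 3 →
      A n = Real.exp (2 * (m:ℝ) ^ ((3:ℝ)/2)) * (m:ℝ) ^ (-(1/4) : ℝ)) :
    Filter.limsup (fun n : ℕ =>
      (n:ℝ) ^ ((1:ℝ)/12) * Real.exp (-2 * Real.sqrt n) * A n) atTop = 1 := by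
  set f : ℕ → ℝ := fun n => (n:ℝ) ^ ((1:ℝ)/12) * Real.exp (-2 * Real.sqrt n) * A n with hf
  have hupper : ∀ᶠ n in atTop, f n ≤ 1 := by
    filter_upwards [eventually_ge_atTop 1] with n hn
    set m := Nat.findGreatest (fun k => k^3 ≤ n) n with hmdef
    have hP1 : (1:ℕ)^3 ≤ n := by simpa using hn
    have hm1 : 1 ≤ m := Nat.le_findGreatest hn hP1
    have hm3 : m^3 ≤ n := Nat.findGreatest_spec (P := fun k => k^3 ≤ n) hn hP1
    have hexp : ∀ k : ℕ, (k+1)^3 = k^3 + 3*k^2 + 3*k + 1 := fun k => by ring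
    have hmm : m ≤ m^3 := Nat.le_self_pow (by norm_num) m
    have hm2 : m^2 ≤ m^3 := Nat.pow_le_pow_right hm1 (by norm_num)
    have h1m : 1 ≤ m^3 := Nat.one_le_pow _ _ hm1
    have hlt : n < (m+1)^3 := by
      by_contra h
      push_neg at h
      have hle : m + 1 ≤ n := le_trans (by
        have := hexp m; omega) h
      exact absurd h (Nat.findGreatest_is_greatest (P := fun k => k^3 ≤ n)
        (Nat.lt_succ_self m) hle)
    have hAn := hA m n hm1 hm3 hlt
    rw [hf]
    simp only
    rw [hAn]
    apply key_upper
    · exact_mod_cast hm1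
    · exact_mod_cast hm3
    · have h8 : n < 8 * m^3 + 1 := by
        have : (m+1)^3 ≤ 8 * m^3 := by nlinarith
        omega
      have : (n:ℝ) ≤ 8 * (m:ℝ)^3 := by exact_mod_cast Nat.lt_succ_iff.mp h8
      exact this
  have hfreq : ∃ᶠ n in atTop, (1:ℝ) ≤ f n := by
    rw [frequently_atTop]
    intro N
    refine ⟨(max N 1)^3, le_trans (le_max_left N 1) (Nat.le_self_pow (by norm_num) _), ?_⟩
    set m := max N 1 with hm
    have hm1 : 1 ≤ m := le_max_right N 1
    have hAn := hA m (m^3) hm1 le_rfl (Nat.pow_lt_pow_left (Nat.lt_succ_self m) (by norm_num))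
    rw [hf]
    simp only
    rw [hAn, cast_rpow_cube m hm1]
  refine le_antisymm ?_ ?_
  · exact limsup_le_of_le (Filter.IsCoboundedUnder.of_frequently_ge hfreq) hupper
  · exact le_limsup_of_frequently_le hfreq (isBoundedUnder_of_eventually_le hupper)
end

section
/- Define A(n) = 0 for n = 0 and A(n) = e^{2 m^{3/2}} m^{-1/4} whenever m^3 \le n < (m+1)^3 with m \ge 1. Then \liminf_{n \to \infty} n^{1/12} e^{-2\sqrt{n} + 3 n^{1/6}} A(n) = 1. -/
open Filter Topology Set

set_option maxHeartbeats 1000000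

-- e^t ≤ 1 + 2t for 0 ≤ t ≤ 1/2
lemma AK_exp_le {t : ℝ} (h0 : 0 ≤ t) (h : t ≤ 1/2) : Real.exp t ≤ 1 + 2*t := by
  have h1 : 1 - t ≤ Real.exp (-t) := by linarith [Real.add_one_le_exp (-t)]
  have h2 : Real.exp t * Real.exp (-t) = 1 := by rw [← Real.exp_add]; simp
  have h3 : (0:ℝ) < Real.exp t := Real.exp_pos t
  nlinarith [mul_le_mul_of_nonneg_left h1 h3.le]

-- block existence
lemma AK_block {n : ℕ} (hn : 1 ≤ n) : ∃ m : ℕ, 1 ≤ m ∧ m ^ 3 ≤ n ∧ n < (m+1) ^ 3 := by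
  classical
  set m := Nat.findGreatest (fun k => k ^ 3 ≤ n) n with hm
  have h1 : 1 ≤ m := Nat.le_findGreatest hn (by simpa using hn)
  have h2 : m ^ 3 ≤ n := Nat.findGreatest_spec (P := fun k => k ^ 3 ≤ n) (m := 1) hn (by simpa using hn)
  refine ⟨m, h1, h2, ?_⟩
  by_contra h
  push_neg at h
  have hle : m + 1 ≤ n := le_trans (Nat.le_self_pow (by norm_num) _) h
  exact Nat.findGreatest_is_greatest (lt_add_one m) hle h
set_option maxHeartbeats 1000000




lemma AK_lower {m n : ℕ} (hm : 1 ≤ m) (h1 : m ^ 3 ≤ n) (h2 : n < (m+1) ^ 3) :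
    1 - 3 / Real.sqrt m ≤
      (n:ℝ) ^ ((1:ℝ)/12) * Real.exp (-2 * Real.sqrt n + 3 * (n:ℝ) ^ ((1:ℝ)/6)) *
        (Real.exp (2 * (m:ℝ) ^ ((3:ℝ)/2)) * (m:ℝ) ^ (-(1/4) : ℝ)) := by
  set a := Real.sqrt m with ha
  set b := Real.sqrt ((m:ℝ)+1) with hb
  have hm0 : (0:ℝ) ≤ m := Nat.cast_nonneg m
  have hm1 : (1:ℝ) ≤ m := by exact_mod_cast hm
  have ha1 : (1:ℝ) ≤ a := by
    rw [ha, show (1:ℝ) = Real.sqrt 1 by simp]; exact Real.sqrt_le_sqrt hm1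
  have ha0 : (0:ℝ) < a := lt_of_lt_of_le one_pos ha1
  have haa : a ^ 2 = (m:ℝ) := Real.sq_sqrt hm0
  have hbb : b ^ 2 = (m:ℝ) + 1 := Real.sq_sqrt (by linarith)
  have hab : a ≤ b := Real.sqrt_le_sqrt (by linarith)
  have hb0 : (0:ℝ) < b := lt_of_lt_of_le ha0 hab
  -- cast bounds for n
  have hn1 : ((m:ℝ)) ^ (3:ℕ) ≤ (n:ℝ) := by exact_mod_cast h1
  have hn2 : (n:ℝ) ≤ ((m:ℝ)+1) ^ (3:ℕ) := by
    have : (n:ℝ) ≤ ((m+1:ℕ):ℝ) ^ (3:ℕ) := by exact_mod_cast le_of_lt h2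
    simpa [Nat.cast_add] using this
  have hn0 : (0:ℝ) ≤ (n:ℝ) := Nat.cast_nonneg n
  -- m^{3/2} = a^3
  have hm32 : (m:ℝ) ^ ((3:ℝ)/2) = a ^ 3 := by
    rw [ha, Real.sqrt_eq_rpow, ← Real.rpow_natCast ((m:ℝ) ^ ((1:ℝ)/2)) 3,
      ← Real.rpow_mul hm0]
    norm_num
  -- step1 : m^{1/4} ≤ n^{1/12}
  have step1 : (m:ℝ) ^ ((1:ℝ)/4) ≤ (n:ℝ) ^ ((1:ℝ)/12) := by
    calc (m:ℝ) ^ ((1:ℝ)/4) = ((m:ℝ) ^ (3:ℕ)) ^ ((1:ℝ)/12) := by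
          rw [← Real.rpow_natCast (m:ℝ) 3, ← Real.rpow_mul hm0]; norm_num
      _ ≤ (n:ℝ) ^ ((1:ℝ)/12) := Real.rpow_le_rpow (by positivity) hn1 (by norm_num)
  -- step2 : a ≤ n^{1/6}
  have step2 : a ≤ (n:ℝ) ^ ((1:ℝ)/6) := by
    calc a = ((m:ℝ) ^ (3:ℕ)) ^ ((1:ℝ)/6) := by
          rw [ha, Real.sqrt_eq_rpow, ← Real.rpow_natCast (m:ℝ) 3, ← Real.rpow_mul hm0]
          norm_num
      _ ≤ (n:ℝ) ^ ((1:ℝ)/6) := Real.rpow_le_rpow (by positivity) hn1 (by norm_num)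
  -- step3 : sqrt n ≤ b^3
  have step3 : Real.sqrt n ≤ b ^ 3 := by
    have hcube : ((m:ℝ)+1) ^ (3:ℕ) = (b ^ 3) ^ 2 := by
      rw [show (b^3)^2 = (b^2)^3 by ring, hbb]
    calc Real.sqrt n ≤ Real.sqrt (((m:ℝ)+1) ^ (3:ℕ)) := Real.sqrt_le_sqrt hn2
      _ = b ^ 3 := by rw [hcube, Real.sqrt_sq (by positivity)]
  -- positivity of m^{1/4}
  have hq0 : (0:ℝ) < (m:ℝ) ^ ((1:ℝ)/4) := Real.rpow_pos_of_pos (by linarith) _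
  have hqinv : (m:ℝ) ^ (-(1/4) : ℝ) = ((m:ℝ) ^ ((1:ℝ)/4))⁻¹ := by
    rw [← Real.rpow_neg_one ((m:ℝ) ^ ((1:ℝ)/4)), ← Real.rpow_mul hm0]; norm_num
  -- exponent bound
  have hexp : -(3/a) ≤ -2 * Real.sqrt n + 3 * (n:ℝ) ^ ((1:ℝ)/6) + 2 * a ^ 3 := by
    have key : 3 * b - 3 * a ≤ 3 / a := by
      rw [le_div_iff₀ ha0]
      nlinarith [sq_nonneg (a - b)]
    have key2 : 2 * b ^ 3 - 2 * a ^ 3 - 3 * a ≤ 3 / a := by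
      rw [le_div_iff₀ ha0]
      nlinarith [sq_nonneg (a - b), sq_nonneg a, sq_nonneg (a*b - 1),
        mul_le_mul_of_nonneg_right (sq_nonneg (a-b)) (le_of_lt ha0)]
    have hsq : Real.sqrt n ≤ b ^ 3 := step3
    nlinarith [mul_le_mul_of_nonneg_left step2 (by norm_num : (0:ℝ) ≤ 3)]
  -- assemble
  have hmain : Real.exp (-(3/a)) ≤
      (n:ℝ) ^ ((1:ℝ)/12) * Real.exp (-2 * Real.sqrt n + 3 * (n:ℝ) ^ ((1:ℝ)/6)) *
        (Real.exp (2 * (m:ℝ) ^ ((3:ℝ)/2)) * (m:ℝ) ^ (-(1/4) : ℝ)) := by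
    rw [hm32, hqinv]
    have e1 : Real.exp (-(3/a)) ≤ Real.exp (-2 * Real.sqrt n + 3 * (n:ℝ) ^ ((1:ℝ)/6) + 2 * a ^ 3) :=
      Real.exp_le_exp.2 hexp
    have e2 : Real.exp (-2 * Real.sqrt n + 3 * (n:ℝ) ^ ((1:ℝ)/6) + 2 * a ^ 3)
        = Real.exp (-2 * Real.sqrt n + 3 * (n:ℝ) ^ ((1:ℝ)/6)) * Real.exp (2 * a ^ 3) := by
      rw [← Real.exp_add]
    have e3 : (1:ℝ) ≤ (n:ℝ) ^ ((1:ℝ)/12) * ((m:ℝ) ^ ((1:ℝ)/4))⁻¹ := by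
      calc (1:ℝ) = (m:ℝ) ^ ((1:ℝ)/4) * ((m:ℝ) ^ ((1:ℝ)/4))⁻¹ := by
            rw [mul_inv_cancel₀ (ne_of_gt hq0)]
        _ ≤ (n:ℝ) ^ ((1:ℝ)/12) * ((m:ℝ) ^ ((1:ℝ)/4))⁻¹ :=
            mul_le_mul_of_nonneg_right step1 (by positivity)
    calc Real.exp (-(3/a)) ≤ Real.exp (-2 * Real.sqrt n + 3 * (n:ℝ) ^ ((1:ℝ)/6)) * Real.exp (2 * a ^ 3) := by
          rw [← e2]; exact e1
      _ ≤ ((n:ℝ) ^ ((1:ℝ)/12) * ((m:ℝ) ^ ((1:ℝ)/4))⁻¹) *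
            (Real.exp (-2 * Real.sqrt n + 3 * (n:ℝ) ^ ((1:ℝ)/6)) * Real.exp (2 * a ^ 3)) := by
          exact le_mul_of_one_le_left (by positivity) e3
      _ = (n:ℝ) ^ ((1:ℝ)/12) * Real.exp (-2 * Real.sqrt n + 3 * (n:ℝ) ^ ((1:ℝ)/6)) *
            (Real.exp (2 * a ^ 3) * ((m:ℝ) ^ ((1:ℝ)/4))⁻¹) := by ring
  have final : 1 - 3/a ≤ Real.exp (-(3/a)) := by
    have := Real.add_one_le_exp (-(3/a))
    linarith
  linarith [le_trans final hmain]




set_option maxHeartbeats 1000000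

lemma AK_prod {c : ℝ} (h0 : 0 < c) (h1 : c ≤ 1) : (1+c)*(1+6*c) ≤ 1+15*c := by nlinarith

lemma AK_upper {m : ℕ} (hm : 49 ≤ m) :
    ((((m+1)^3 - 1 : ℕ)):ℝ) ^ ((1:ℝ)/12) *
      Real.exp (-2 * Real.sqrt (((m+1)^3 - 1 : ℕ)) + 3 * ((((m+1)^3 - 1 : ℕ)):ℝ) ^ ((1:ℝ)/6)) *
        (Real.exp (2 * (m:ℝ) ^ ((3:ℝ)/2)) * (m:ℝ) ^ (-(1/4) : ℝ)) ≤ 1 + 15 / Real.sqrt m := by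
  obtain ⟨n, hn⟩ : ∃ n : ℕ, n = (m+1)^3 - 1 := ⟨_, rfl⟩
  rw [← hn]
  obtain ⟨a, ha⟩ : ∃ a : ℝ, a = Real.sqrt m := ⟨_, rfl⟩
  obtain ⟨b, hb⟩ : ∃ b : ℝ, b = Real.sqrt ((m:ℝ)+1) := ⟨_, rfl⟩
  rw [← ha]
  have hm0 : (0:ℝ) ≤ m := Nat.cast_nonneg m
  have hm1 : (1:ℝ) ≤ m := by exact_mod_cast le_trans (by norm_num) hm
  have ha7 : (7:ℝ) ≤ a := by
    rw [ha, show (7:ℝ) = Real.sqrt 49 by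
      rw [show (49:ℝ) = 7^2 by norm_num, Real.sqrt_sq (by norm_num)]]
    exact Real.sqrt_le_sqrt (by exact_mod_cast hm)
  have ha1 : (1:ℝ) ≤ a := by linarith
  have ha0 : (0:ℝ) < a := by linarith
  have haa : a ^ 2 = (m:ℝ) := by rw [ha]; exact Real.sq_sqrt hm0
  have hbb : b ^ 2 = (m:ℝ) + 1 := by rw [hb]; exact Real.sq_sqrt (by linarith)
  have hba2 : b ^ 2 = a ^ 2 + 1 := by rw [hbb, haa]
  have hab : a ≤ b := by rw [ha, hb]; exact Real.sqrt_le_sqrt (by linarith)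
  have hb0 : (0:ℝ) < b := lt_of_lt_of_le ha0 hab
  have hb1 : (1:ℝ) ≤ b := le_trans ha1 hab
  -- cast n
  have hncast : (n:ℝ) = ((m:ℝ)+1) ^ (3:ℕ) - 1 := by
    rw [hn]
    push_cast [Nat.cast_sub (Nat.one_le_pow _ _ (Nat.succ_pos m))]
    ring
  have hb6 : ((m:ℝ)+1) ^ (3:ℕ) = (b ^ 3) ^ 2 := by
    rw [show (b^3)^2 = (b^2)^3 by ring, hbb]
  have hn0 : (0:ℝ) ≤ (n:ℝ) := Nat.cast_nonneg n
  have hnle : (n:ℝ) ≤ ((m:ℝ)+1) ^ (3:ℕ) := by rw [hncast]; linarith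
  -- m^{3/2} = a^3
  have hm32 : (m:ℝ) ^ ((3:ℝ)/2) = a ^ 3 := by
    rw [ha, Real.sqrt_eq_rpow, ← Real.rpow_natCast ((m:ℝ) ^ ((1:ℝ)/2)) 3,
      ← Real.rpow_mul hm0]
    norm_num
  -- upper bounds
  have up1 : (n:ℝ) ^ ((1:ℝ)/12) ≤ ((m:ℝ)+1) ^ ((1:ℝ)/4) := by
    calc (n:ℝ) ^ ((1:ℝ)/12) ≤ (((m:ℝ)+1) ^ (3:ℕ)) ^ ((1:ℝ)/12) :=
          Real.rpow_le_rpow hn0 hnle (by norm_num)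
      _ = ((m:ℝ)+1) ^ ((1:ℝ)/4) := by
          rw [← Real.rpow_natCast ((m:ℝ)+1) 3, ← Real.rpow_mul (by linarith)]; norm_num
  have up2 : (n:ℝ) ^ ((1:ℝ)/6) ≤ b := by
    calc (n:ℝ) ^ ((1:ℝ)/6) ≤ (((m:ℝ)+1) ^ (3:ℕ)) ^ ((1:ℝ)/6) :=
          Real.rpow_le_rpow hn0 hnle (by norm_num)
      _ = b := by
          rw [hb, Real.sqrt_eq_rpow, ← Real.rpow_natCast ((m:ℝ)+1) 3,
            ← Real.rpow_mul (by linarith)]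
          norm_num
  have hbinv : (b^3)⁻¹ ≤ 1 := by
    rw [inv_le_one_iff₀]; right; nlinarith
  have up3 : b ^ 3 - (b^3)⁻¹ ≤ Real.sqrt n := by
    rw [Real.le_sqrt (by nlinarith [inv_pos.2 (show (0:ℝ) < b^3 by positivity)]) hn0]
    have hx0 : (0:ℝ) < b^3 := by positivity
    have hexpand : (b^3 - (b^3)⁻¹)^2 = (b^3)^2 - 2 + ((b^3)⁻¹)^2 := by
      field_simp
      ring
    have h1 : ((b^3)⁻¹)^2 ≤ 1 := by nlinarith [inv_pos.2 hx0]
    rw [hncast, hb6]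
    linarith [hexpand, h1]
  -- m^{-1/4}
  have hq0 : (0:ℝ) < (m:ℝ) ^ ((1:ℝ)/4) := Real.rpow_pos_of_pos (by linarith) _
  have hqinv : (m:ℝ) ^ (-(1/4) : ℝ) = ((m:ℝ) ^ ((1:ℝ)/4))⁻¹ := by
    rw [← Real.rpow_neg_one ((m:ℝ) ^ ((1:ℝ)/4)), ← Real.rpow_mul hm0]; norm_num
  -- prefactor bound
  have hpre : ((m:ℝ)+1) ^ ((1:ℝ)/4) * ((m:ℝ) ^ ((1:ℝ)/4))⁻¹ ≤ 1 + a⁻¹ := by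
    have hd : ((m:ℝ)+1) ^ ((1:ℝ)/4) * ((m:ℝ) ^ ((1:ℝ)/4))⁻¹
        = (((m:ℝ)+1)/m) ^ ((1:ℝ)/4) := by
      rw [Real.div_rpow (by linarith) hm0]; ring
    have hbase : (1:ℝ) ≤ ((m:ℝ)+1)/m := by
      rw [le_div_iff₀ (by linarith)]; linarith
    have h14 : (((m:ℝ)+1)/m) ^ ((1:ℝ)/4) ≤ (((m:ℝ)+1)/m) ^ (1:ℝ) :=
      Real.rpow_le_rpow_of_exponent_le hbase (by norm_num)
    have hsplit : ((m:ℝ)+1)/m = 1 + ((m:ℝ))⁻¹ := by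
      rw [add_div, div_self (by linarith : (m:ℝ) ≠ 0), div_eq_mul_inv, one_mul]
    have hma : ((m:ℝ))⁻¹ ≤ a⁻¹ := by
      apply inv_anti₀ ha0
      nlinarith
    rw [hd]
    calc (((m:ℝ)+1)/m) ^ ((1:ℝ)/4) ≤ (((m:ℝ)+1)/m) ^ (1:ℝ) := h14
      _ = 1 + ((m:ℝ))⁻¹ := by rw [Real.rpow_one, hsplit]
      _ ≤ 1 + a⁻¹ := by linarith
  -- exponent bound
  obtain ⟨t, htdef⟩ : ∃ t : ℝ, t = 2*a^3 - 2*b^3 + 3*b + 2*(b^3)⁻¹ := ⟨_, rfl⟩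
  have hst : -2 * Real.sqrt n + 3 * (n:ℝ) ^ ((1:ℝ)/6) + 2 * a^3 ≤ t := by
    rw [htdef]; linarith [up3, up2]
  have hid : 2*a^3 - 2*b^3 + 3*b = (b-a)^2*(b+2*a) := by
    linear_combination (-3*b) * hba2
  have ht0 : 0 ≤ t := by
    have key : (0:ℝ) ≤ (b-a)^2*(b+2*a) :=
      mul_nonneg (sq_nonneg _) (by linarith)
    have hpos : (0:ℝ) < (b^3)⁻¹ := by positivity
    rw [htdef, hid]; linarith
  have hbadiff : b - a ≤ (2*a)⁻¹ := by
    rw [show ((2:ℝ)*a)⁻¹ = 1/(2*a) by ring, le_div_iff₀ (by positivity : (0:ℝ) < 2*a)]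
    nlinarith [sq_nonneg (a-b)]
  have ht1 : 2*a^3 - 2*b^3 + 3*b ≤ a⁻¹ := by
    have hb2a : b ≤ 2*a := by nlinarith
    have hd0 : (0:ℝ) ≤ b - a := by linarith
    have h1 : (b-a)^2 ≤ ((2*a)⁻¹)^2 := pow_le_pow_left₀ hd0 hbadiff 2
    have h2 : (b-a)^2*(b+2*a) ≤ ((2*a)⁻¹)^2 * (4*a) := by
      apply mul_le_mul h1 (by linarith) (by linarith) (by positivity)
    rw [hid]
    calc (b-a)^2*(b+2*a) ≤ ((2*a)⁻¹)^2 * (4*a) := h2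
      _ = a⁻¹ := by field_simp; ring
  have ht2 : 2*(b^3)⁻¹ ≤ 2*a⁻¹ := by
    have : a⁻¹ ≥ (b^3)⁻¹ := by
      apply inv_anti₀ ha0
      nlinarith
    linarith
  have hta : t ≤ 3*a⁻¹ := by rw [htdef]; linarith
  have hthalf : t ≤ 1/2 := by
    have h7 : a⁻¹ ≤ 7⁻¹ := by
      apply inv_anti₀ (by norm_num) ha7
    calc t ≤ 3*a⁻¹ := hta
      _ ≤ 3*(7:ℝ)⁻¹ := by linarith
      _ ≤ 1/2 := by norm_num
  -- exp bound
  have hexp2 : Real.exp t ≤ 1 + 6*a⁻¹ := by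
    have h1 : 1 - t ≤ Real.exp (-t) := by linarith [Real.add_one_le_exp (-t)]
    have h2 : Real.exp t * Real.exp (-t) = 1 := by rw [← Real.exp_add]; simp
    have h3 : (0:ℝ) < Real.exp t := Real.exp_pos t
    have hb' : Real.exp t ≤ 1 + 2*t := by
      nlinarith [mul_le_mul_of_nonneg_left h1 h3.le]
    linarith [hta]
  -- assemble
  have hXeq : (n:ℝ) ^ ((1:ℝ)/12) *
      Real.exp (-2 * Real.sqrt n + 3 * (n:ℝ) ^ ((1:ℝ)/6)) *
        (Real.exp (2 * (m:ℝ) ^ ((3:ℝ)/2)) * (m:ℝ) ^ (-(1/4) : ℝ))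
      = ((n:ℝ) ^ ((1:ℝ)/12) * ((m:ℝ) ^ ((1:ℝ)/4))⁻¹) *
        Real.exp (-2 * Real.sqrt n + 3 * (n:ℝ) ^ ((1:ℝ)/6) + 2*a^3) := by
    rw [hm32, hqinv]; simp only [Real.exp_add]; ring
  rw [hXeq]
  have hfac : (n:ℝ) ^ ((1:ℝ)/12) * ((m:ℝ) ^ ((1:ℝ)/4))⁻¹ ≤ 1 + a⁻¹ := by
    refine le_trans ?_ hpre
    exact mul_le_mul_of_nonneg_right up1 (by positivity)
  have hfac0 : (0:ℝ) ≤ (n:ℝ) ^ ((1:ℝ)/12) * ((m:ℝ) ^ ((1:ℝ)/4))⁻¹ := by positivity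
  have hE : Real.exp (-2 * Real.sqrt n + 3 * (n:ℝ) ^ ((1:ℝ)/6) + 2*a^3) ≤ 1 + 6*a⁻¹ :=
    le_trans (Real.exp_le_exp.2 hst) hexp2
  have hE0 : (0:ℝ) ≤ Real.exp (-2 * Real.sqrt n + 3 * (n:ℝ) ^ ((1:ℝ)/6) + 2*a^3) :=
    (Real.exp_pos _).le
  have hgoal15 : 15 / a = 15 * a⁻¹ := div_eq_mul_inv _ _
  rw [hgoal15]
  have hainv1 : a⁻¹ ≤ 1 := by
    rw [inv_le_one_iff₀]; right; linarith
  have hainv0 : 0 < a⁻¹ := by positivity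
  calc ((n:ℝ) ^ ((1:ℝ)/12) * ((m:ℝ) ^ ((1:ℝ)/4))⁻¹) *
        Real.exp (-2 * Real.sqrt n + 3 * (n:ℝ) ^ ((1:ℝ)/6) + 2*a^3)
      ≤ (1 + a⁻¹) * (1 + 6*a⁻¹) := by
        apply mul_le_mul hfac hE hE0 (by positivity)
    _ ≤ 1 + 15 * a⁻¹ := AK_prod hainv0 hainv1

lemma AK_sqrt_ge {c : ℝ} {M m : ℕ} (hc : 0 < c) (hM : (c:ℝ)^2 ≤ M) (hMm : M ≤ m) :
    c ≤ Real.sqrt m := by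
  have h1 : (c:ℝ)^2 ≤ (m:ℝ) := le_trans hM (by exact_mod_cast hMm)
  calc c = Real.sqrt (c^2) := (Real.sqrt_sq hc.le).symm
    _ ≤ Real.sqrt m := Real.sqrt_le_sqrt h1

/-- For the Avakumović–Karamata coefficients,
`liminf_{n→∞} n^{1/12} e^{-2√n + 3n^{1/6}} A(n) = 1`. -/
theorem AK_liminf (A : ℕ → ℝ) (hA0 : A 0 = 0)
    (hA : ∀ m n : ℕ, 1 ≤ m → m ^ 3 ≤ n → n < (m + 1) ^ 3 →
      A n = Real.exp (2 * (m:ℝ) ^ ((3:ℝ)/2)) * (m:ℝ) ^ (-(1/4) : ℝ)) :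
    Filter.liminf (fun n : ℕ =>
      (n:ℝ) ^ ((1:ℝ)/12) * Real.exp (-2 * Real.sqrt n + 3 * (n:ℝ) ^ ((1:ℝ)/6)) * A n)
      atTop = 1 := by
  obtain ⟨u, hu⟩ : ∃ u : ℕ → ℝ, u = (fun n : ℕ =>
      (n:ℝ) ^ ((1:ℝ)/12) * Real.exp (-2 * Real.sqrt n + 3 * (n:ℝ) ^ ((1:ℝ)/6)) * A n) := ⟨_, rfl⟩
  rw [← hu]
  have hun : ∀ n : ℕ, u n =
      (n:ℝ) ^ ((1:ℝ)/12) * Real.exp (-2 * Real.sqrt n + 3 * (n:ℝ) ^ ((1:ℝ)/6)) * A n :=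
    fun n => by rw [hu]
  have hA_nonneg : ∀ n, 0 ≤ A n := by
    intro n
    rcases Nat.eq_zero_or_pos n with h | h
    · rw [h, hA0]
    · obtain ⟨m, hm1, hm2, hm3⟩ := AK_block h
      rw [hA m n hm1 hm2 hm3]
      positivity
  have hu_nonneg : ∀ n, 0 ≤ u n := by
    intro n
    rw [hun n]
    exact mul_nonneg (mul_nonneg (by positivity) (Real.exp_pos _).le) (hA_nonneg n)
  -- frequently small
  have hfreq : ∀ ε : ℝ, 0 < ε → ∃ᶠ n in atTop, u n ≤ 1 + ε := by
    intro ε hε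
    rw [Filter.frequently_atTop]
    intro N
    obtain ⟨M, hM⟩ := exists_nat_ge ((15/ε)^2)
    set m := max (max M 49) N with hmdef
    have hm49 : 49 ≤ m := le_trans (le_max_right M 49) (le_max_left _ N)
    have hmM : M ≤ m := le_trans (le_max_left M 49) (le_max_left _ N)
    have hmN : N ≤ m := le_max_right _ N
    have hm1 : 1 ≤ m := le_trans (by norm_num) hm49
    have hcube1 : 1 ≤ (m+1)^3 := Nat.one_le_pow _ _ (Nat.succ_pos m)
    have hmle : m + 1 ≤ (m+1)^3 := Nat.le_self_pow (by norm_num) _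
    refine ⟨(m+1)^3 - 1, by omega, ?_⟩
    have hblo : m^3 ≤ (m+1)^3 - 1 := by
      have : m^3 < (m+1)^3 := Nat.pow_lt_pow_left (lt_add_one m) (by norm_num)
      omega
    have hbhi : (m+1)^3 - 1 < (m+1)^3 := by omega
    have hup := AK_upper (m := m) hm49
    rw [hun, hA m _ hm1 hblo hbhi]
    refine le_trans hup ?_
    have hs0 : 0 < Real.sqrt m := Real.sqrt_pos.2 (by exact_mod_cast hm1)
    have hsq : 15/ε ≤ Real.sqrt m := AK_sqrt_ge (by positivity) hM hmM
    rw [div_le_iff₀ hε] at hsq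
    have h15 : 15 / Real.sqrt m ≤ ε := by
      rw [div_le_iff₀ hs0]
      nlinarith
    linarith
  -- eventually large
  have hev : ∀ ε : ℝ, 0 < ε → ∀ᶠ n in atTop, 1 - ε ≤ u n := by
    intro ε hε
    obtain ⟨M, hM⟩ := exists_nat_ge ((3/ε)^2)
    filter_upwards [Filter.eventually_ge_atTop ((M+1)^3)] with n hn
    have hn1 : 1 ≤ n := le_trans (Nat.one_le_pow _ _ (Nat.succ_pos M)) hn
    obtain ⟨m, hm1, hm2, hm3⟩ := AK_block hn1
    have hMm : M ≤ m := by
      by_contra hc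
      push_neg at hc
      have : (m+1)^3 ≤ (M+1)^3 := Nat.pow_le_pow_left (by omega) 3
      omega
    rw [hun, hA m n hm1 hm2 hm3]
    refine le_trans ?_ (AK_lower hm1 hm2 hm3)
    have hs0 : 0 < Real.sqrt m := Real.sqrt_pos.2 (by exact_mod_cast hm1)
    have hsq : 3/ε ≤ Real.sqrt m := AK_sqrt_ge (by positivity) hM hMm
    rw [div_le_iff₀ hε] at hsq
    rw [sub_le_sub_iff_left, div_le_iff₀ hs0]
    nlinarith
  -- liminf
  have hbdd : Filter.IsBoundedUnder (· ≥ ·) Filter.atTop u :=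
    Filter.isBoundedUnder_of ⟨0, fun n => hu_nonneg n⟩
  have hcob : Filter.IsCoboundedUnder (· ≥ ·) Filter.atTop u :=
    Filter.IsCoboundedUnder.of_frequently_le (a := 2)
      ((hfreq 1 one_pos).mono fun n h => by linarith)
  have h1 : Filter.liminf u Filter.atTop ≤ 1 := by
    by_contra hc
    push_neg at hc
    have hlt : Filter.liminf u Filter.atTop ≤ 1 + (Filter.liminf u Filter.atTop - 1)/2 :=
      Filter.liminf_le_of_frequently_le (hfreq _ (by linarith)) hbdd
    linarith
  have h2 : 1 ≤ Filter.liminf u Filter.atTop := by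
    by_contra hc
    push_neg at hc
    have hgt : 1 - (1 - Filter.liminf u Filter.atTop)/2 ≤ Filter.liminf u Filter.atTop :=
      Filter.le_liminf_of_le hcob (hev _ (by linarith))
    linarith
  linarith
end

section
/- Define A(n) = 0 for n = 0 and A(n) = e^{2 m^{3/2}} m^{-1/4} whenever m^3 \le n < (m+1)^3 with m \ge 1, and set B(n) = \frac{1}{3} n^{-1/4} e^{2\sqrt{n}} for n \ge 1. Then \limsup_{n \to \infty} A(n)/B(n) = \infty and \liminf_{n \to \infty} A(n)/B(n) = 0; in particular the asymptotic relation A(n) \sim B(n) fails. -/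
open Filter Topology Set

/-- Every `n ≥ 1` lies in some cube block. -/
lemma AK_cube_decomp (n : ℕ) (hn : 1 ≤ n) :
    ∃ m : ℕ, 1 ≤ m ∧ m ^ 3 ≤ n ∧ n < (m + 1) ^ 3 := by
  classical
  refine ⟨Nat.findGreatest (fun k => k ^ 3 ≤ n) n, ?_, ?_, ?_⟩
  · exact Nat.le_findGreatest (P := fun k => k ^ 3 ≤ n) hn (by simpa using hn)
  · exact Nat.findGreatest_spec (P := fun k => k ^ 3 ≤ n) (m := 1) hn (by simpa using hn)
  · by_contra h
    push_neg at h
    have h1 : Nat.findGreatest (fun k => k ^ 3 ≤ n) n + 1 ≤ n :=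
      le_trans (Nat.le_self_pow (by norm_num) _) h
    exact Nat.findGreatest_is_greatest (Nat.lt_succ_self _) h1 h

set_option maxHeartbeats 1600000 in
/-- For the Avakumović–Karamata coefficients `A(n)` and `B(n) = (1/3) n^{-1/4} e^{2√n}`,
`limsup A(n)/B(n) = ∞` and `liminf A(n)/B(n) = 0`; in particular `A(n) ~ B(n)` fails. -/
theorem AK_not_asymptotic (A : ℕ → ℝ) (hA0 : A 0 = 0)
    (hA : ∀ m n : ℕ, 1 ≤ m → m ^ 3 ≤ n → n < (m + 1) ^ 3 →
      A n = Real.exp (2 * (m:ℝ) ^ ((3:ℝ)/2)) * (m:ℝ) ^ (-(1/4) : ℝ))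
    (B : ℕ → ℝ)
    (hB : ∀ n : ℕ, 1 ≤ n → B n = 1/3 * (n:ℝ) ^ (-(1/4) : ℝ) * Real.exp (2 * Real.sqrt n)) :
    Filter.limsup (fun n : ℕ => ((A n / B n : ℝ) : EReal)) atTop = ⊤ ∧
    Filter.liminf (fun n : ℕ => ((A n / B n : ℝ) : EReal)) atTop = 0 ∧
    ¬ Tendsto (fun n : ℕ => A n / B n) atTop (𝓝 1) := by
  set u : ℕ → EReal := fun n : ℕ => ((A n / B n : ℝ) : EReal) with hu
  -- value at cubes
  have hcube : ∀ m : ℕ, 1 ≤ m → A (m ^ 3) / B (m ^ 3) = 3 * (m:ℝ) ^ ((1:ℝ)/2) := by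
    intro m hm
    have hx : (1:ℝ) ≤ (m:ℝ) := by exact_mod_cast hm
    have hxpos : (0:ℝ) < (m:ℝ) := lt_of_lt_of_le one_pos hx
    have hlt : m ^ 3 < (m + 1) ^ 3 := by nlinarith
    have h1 : 1 ≤ m ^ 3 := Nat.one_le_pow _ _ hm
    have hcast : ((m ^ 3 : ℕ) : ℝ) = (m:ℝ) ^ (3:ℕ) := by push_cast; ring
    have hsqrt : Real.sqrt ((m ^ 3 : ℕ) : ℝ) = (m:ℝ) ^ ((3:ℝ)/2) := by
      rw [hcast, Real.sqrt_eq_rpow, ← Real.rpow_natCast (m:ℝ) 3, ← Real.rpow_mul hxpos.le]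
      norm_num
    have hrpow : ((m ^ 3 : ℕ) : ℝ) ^ (-(1/4) : ℝ) = (m:ℝ) ^ (-(3/4) : ℝ) := by
      rw [hcast, ← Real.rpow_natCast (m:ℝ) 3, ← Real.rpow_mul hxpos.le]
      norm_num
    rw [hA m (m ^ 3) hm le_rfl hlt, hB (m ^ 3) h1, hsqrt, hrpow]
    have e1 : Real.exp (2 * (m:ℝ) ^ ((3:ℝ)/2)) ≠ 0 := Real.exp_ne_zero _
    have e2 : (m:ℝ) ^ (-(3/4) : ℝ) ≠ 0 := (Real.rpow_pos_of_pos hxpos _).ne'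
    have key : (m:ℝ) ^ ((1:ℝ)/2) * (m:ℝ) ^ (-(3/4) : ℝ) = (m:ℝ) ^ (-(1/4) : ℝ) := by
      rw [← Real.rpow_add hxpos]; norm_num
    rw [div_eq_iff (by positivity), ← key]
    ring
  -- ratio along cubes tends to infinity
  have hcube_top : Tendsto (fun m : ℕ => A (m ^ 3) / B (m ^ 3)) atTop atTop := by
    have h1 : Tendsto (fun m : ℕ => 3 * (m:ℝ) ^ ((1:ℝ)/2)) atTop atTop := by
      apply Tendsto.const_mul_atTop (by norm_num : (0:ℝ) < 3)
      exact (tendsto_rpow_atTop (by norm_num : (0:ℝ) < 1/2)).comp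
        tendsto_natCast_atTop_atTop
    refine h1.congr' ?_
    filter_upwards [eventually_ge_atTop 1] with m hm
    exact (hcube m hm).symm
  have hc : Tendsto (fun m : ℕ => m ^ 3) atTop atTop :=
    tendsto_atTop_mono (fun m => Nat.le_self_pow (by norm_num) m) tendsto_id
  constructor
  · -- limsup = ⊤
    apply le_antisymm le_top
    have htop : Tendsto (fun m : ℕ => u (m ^ 3)) atTop (𝓝 ⊤) := by
      rw [EReal.tendsto_nhds_top_iff_real]
      intro y
      filter_upwards [hcube_top.eventually_gt_atTop y] with m hm
      simpa only [hu] using EReal.coe_lt_coe_iff.2 hm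
    have : limsup (fun m : ℕ => u (m ^ 3)) atTop = ⊤ := htop.limsup_eq
    calc (⊤ : EReal) = limsup (u ∘ fun m : ℕ => m ^ 3) atTop := this.symm
      _ = limsup u (map (fun m : ℕ => m ^ 3) atTop) := limsup_comp u _ _
      _ ≤ limsup u atTop := limsup_le_limsup_of_le hc
  have hnonneg : ∀ n : ℕ, 1 ≤ n → 0 ≤ A n / B n := by
    intro n hn
    obtain ⟨m, hm, hle, hlt⟩ := AK_cube_decomp n hn
    have hA' := hA m n hm hle hlt
    have hB' := hB n hn
    have hnpos : (0:ℝ) < (n:ℝ) := by exact_mod_cast hn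
    rw [hA', hB']
    positivity
  -- second subsequence : n = (m+1)^3 - 1
  set c : ℕ → ℕ := fun m => (m + 1) ^ 3 - 1 with hcdef
  have hc_ge : ∀ m : ℕ, m ≤ c m := by
    intro m
    have h1 : m + 1 ≤ (m + 1) ^ 3 := Nat.le_self_pow (by norm_num) _
    exact Nat.le_sub_one_of_lt (lt_of_lt_of_le (Nat.lt_succ_self m) h1)
  have hc_top : Tendsto c atTop atTop := tendsto_atTop_mono hc_ge tendsto_id
  -- the upper bound on the ratio at c m
  have hbound : ∀ m : ℕ, 1 ≤ m → A (c m) / B (c m) ≤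
      6 * Real.exp 2 * ((m:ℝ) ^ ((1:ℝ)/2) * Real.exp (-((m:ℝ) ^ ((1:ℝ)/2)))) := by
    intro m hm
    have hx : (1:ℝ) ≤ (m:ℝ) := by exact_mod_cast hm
    have hxpos : (0:ℝ) < (m:ℝ) := lt_of_lt_of_le one_pos hx
    set s : ℝ := (m:ℝ) ^ ((1:ℝ)/2) with hsdef
    have hs0 : 0 ≤ s := Real.rpow_nonneg hxpos.le _
    have hs1 : 1 ≤ s := Real.one_le_rpow hx (by norm_num)
    have hs2 : s ^ 2 = (m:ℝ) := by
      rw [hsdef, ← Real.rpow_natCast (_ ^ _) 2, ← Real.rpow_mul hxpos.le]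
      norm_num
    have hs3 : s ^ 3 = (m:ℝ) ^ ((3:ℝ)/2) := by
      rw [hsdef, ← Real.rpow_natCast (_ ^ _) 3, ← Real.rpow_mul hxpos.le]
      norm_num
    -- basic facts about n := c m
    have hcube_le : m ^ 3 + 1 ≤ (m + 1) ^ 3 := by nlinarith
    have hle : m ^ 3 ≤ c m := Nat.le_sub_one_of_lt hcube_le
    have hlt : c m < (m + 1) ^ 3 :=
      Nat.sub_lt (Nat.one_le_pow _ _ (Nat.succ_pos m)) one_pos
    have hn1 : 1 ≤ c m := le_trans hm (hc_ge m)
    set N : ℝ := ((c m : ℕ) : ℝ) with hNdef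
    have hN1 : (1:ℝ) ≤ N := by rw [hNdef]; exact_mod_cast hn1
    have hNpos : (0:ℝ) < N := lt_of_lt_of_le one_pos hN1
    have hNcast : N = ((m:ℝ) + 1) ^ 3 - 1 := by
      rw [hNdef, hcdef]
      have h1 : 1 ≤ (m + 1) ^ 3 := Nat.one_le_pow _ _ (by omega)
      push_cast [Nat.cast_sub h1]
      ring
    -- value of the ratio
    have hval : A (c m) / B (c m) =
        3 * (N ^ ((1:ℝ)/4) / (m:ℝ) ^ ((1:ℝ)/4)) *
          Real.exp (2 * (m:ℝ) ^ ((3:ℝ)/2) - 2 * Real.sqrt N) := by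
      rw [hA m (c m) hm hle hlt, hB (c m) hn1, Real.exp_sub]
      rw [Real.rpow_neg hxpos.le, Real.rpow_neg hNpos.le]
      have e1 : Real.exp (2 * Real.sqrt N) ≠ 0 := Real.exp_ne_zero _
      have p1 : (0:ℝ) < (m:ℝ) ^ ((1:ℝ)/4) := Real.rpow_pos_of_pos hxpos _
      have p2 : (0:ℝ) < N ^ ((1:ℝ)/4) := Real.rpow_pos_of_pos hNpos _
      field_simp
      ring
    rw [hval]
    -- bound the power factor
    have hfac1 : N ^ ((1:ℝ)/4) / (m:ℝ) ^ ((1:ℝ)/4) ≤ 2 * s := by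
      rw [div_le_iff₀ (Real.rpow_pos_of_pos hxpos _)]
      have hNle : N ≤ 8 * (m:ℝ) ^ 3 := by
        rw [hNcast]
        nlinarith [mul_le_mul_of_nonneg_left hx (by positivity : (0:ℝ) ≤ (m:ℝ)^2),
          mul_le_mul_of_nonneg_left hx (by positivity : (0:ℝ) ≤ (m:ℝ)), hx]
      calc N ^ ((1:ℝ)/4) ≤ (8 * (m:ℝ) ^ 3) ^ ((1:ℝ)/4) :=
            Real.rpow_le_rpow hNpos.le hNle (by norm_num)
        _ = 8 ^ ((1:ℝ)/4) * ((m:ℝ) ^ 3) ^ ((1:ℝ)/4) :=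
            Real.mul_rpow (by norm_num) (by positivity)
        _ ≤ 2 * (m:ℝ) ^ ((3:ℝ)/4) := by
            have h8 : (8:ℝ) ^ ((1:ℝ)/4) ≤ 2 := by
              have h16 : ((16:ℝ)) ^ ((1:ℝ)/4) = 2 := by
                rw [show (16:ℝ) = (2:ℝ) ^ ((4:ℕ):ℝ) by
                      rw [Real.rpow_natCast]; norm_num,
                  ← Real.rpow_mul (by norm_num : (0:ℝ) ≤ 2)]
                norm_num
              calc (8:ℝ) ^ ((1:ℝ)/4) ≤ (16:ℝ) ^ ((1:ℝ)/4) :=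
                    Real.rpow_le_rpow (by norm_num) (by norm_num) (by norm_num)
                _ = 2 := h16
            have h3 : ((m:ℝ) ^ 3) ^ ((1:ℝ)/4) = (m:ℝ) ^ ((3:ℝ)/4) := by
              rw [← Real.rpow_natCast (m:ℝ) 3, ← Real.rpow_mul hxpos.le]
              norm_num
            rw [h3]
            have : (0:ℝ) ≤ (m:ℝ) ^ ((3:ℝ)/4) := Real.rpow_nonneg hxpos.le _
            nlinarith
        _ = 2 * s * (m:ℝ) ^ ((1:ℝ)/4) := by
            rw [hsdef, mul_assoc, ← Real.rpow_add hxpos]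
            norm_num
    -- bound the exponential factor
    have hfac2 : Real.exp (2 * (m:ℝ) ^ ((3:ℝ)/2) - 2 * Real.sqrt N) ≤
        Real.exp 2 * Real.exp (-s) := by
      rw [← Real.exp_add]
      apply Real.exp_le_exp.2
      -- need : 2 * m^{3/2} - 2 √N ≤ 2 - s , i.e. √N ≥ m^{3/2} + s/2 - 1
      have hcube3 : (1:ℝ) ≤ s ^ 3 := one_le_pow₀ hs1
      have hsq : (1:ℝ) ≤ s ^ 2 := one_le_pow₀ hs1
      have hy : s ^ 3 + s / 2 - 1 ≤ Real.sqrt N := by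
        have hy0 : 0 ≤ s ^ 3 + s / 2 - 1 := by linarith
        rw [Real.le_sqrt hy0 hNpos.le, hNcast, ← hs2]
        nlinarith [pow_nonneg hs0 3, pow_nonneg hs0 4, hsq, hs1]
      rw [← hs3]
      linarith
    calc 3 * (N ^ ((1:ℝ)/4) / (m:ℝ) ^ ((1:ℝ)/4)) *
          Real.exp (2 * (m:ℝ) ^ ((3:ℝ)/2) - 2 * Real.sqrt N)
        ≤ 3 * (2 * s) * (Real.exp 2 * Real.exp (-s)) := by
          have hq : 3 * (N ^ ((1:ℝ)/4) / (m:ℝ) ^ ((1:ℝ)/4)) ≤ 3 * (2 * s) := by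
            nlinarith [hfac1]
          have hq0 : (0:ℝ) ≤ 3 * (2 * s) := by positivity
          exact mul_le_mul hq hfac2 (Real.exp_pos _).le hq0
      _ = 6 * Real.exp 2 * (s * Real.exp (-s)) := by ring
  -- the bounding sequence tends to 0
  have hg0 : Tendsto (fun m : ℕ =>
      6 * Real.exp 2 * ((m:ℝ) ^ ((1:ℝ)/2) * Real.exp (-((m:ℝ) ^ ((1:ℝ)/2))))) atTop (𝓝 0) := by
    have h1 : Tendsto (fun t : ℝ => t * Real.exp (-t)) atTop (𝓝 0) := by
      have := Real.tendsto_pow_mul_exp_neg_atTop_nhds_zero 1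
      simpa using this
    have h2 : Tendsto (fun m : ℕ => (m:ℝ) ^ ((1:ℝ)/2)) atTop atTop :=
      (tendsto_rpow_atTop (by norm_num : (0:ℝ) < 1/2)).comp tendsto_natCast_atTop_atTop
    have h3 := (h1.comp h2).const_mul (6 * Real.exp 2)
    simpa using h3
  -- ratio along c tends to 0
  have hc_zero : Tendsto (fun m : ℕ => A (c m) / B (c m)) atTop (𝓝 0) := by
    apply squeeze_zero' (g := fun m : ℕ =>
      6 * Real.exp 2 * ((m:ℝ) ^ ((1:ℝ)/2) * Real.exp (-((m:ℝ) ^ ((1:ℝ)/2)))))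
      ?_ ?_ hg0
    · filter_upwards [eventually_ge_atTop 1] with m hm
      exact hnonneg _ (le_trans hm (hc_ge m))
    · filter_upwards [eventually_ge_atTop 1] with m hm
      exact hbound m hm
  refine ⟨?_, ?_⟩
  · -- liminf = 0
    apply le_antisymm
    · have hzero : Tendsto (fun m : ℕ => u (c m)) atTop (𝓝 (0:EReal)) := by
        have : Tendsto (fun m : ℕ => ((A (c m) / B (c m) : ℝ) : EReal)) atTop
            (𝓝 (((0:ℝ)) : EReal)) := EReal.tendsto_coe.2 hc_zero
        simpa using this
      have : liminf (fun m : ℕ => u (c m)) atTop = 0 := hzero.liminf_eq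
      calc liminf u atTop ≤ liminf u (map c atTop) := liminf_le_liminf_of_le hc_top
        _ = liminf (u ∘ c) atTop := (liminf_comp u c atTop).symm
        _ = 0 := this
    · refine le_liminf_of_le (by isBoundedDefault) ?_
      filter_upwards [eventually_ge_atTop 1] with n hn
      have := hnonneg n hn
      simpa [hu] using EReal.coe_le_coe_iff.2 this
  · -- ¬ tendsto 1
    intro h
    exact not_tendsto_atTop_of_tendsto_nhds (h.comp hc) hcube_top
end

section
/- As t \to 0^+, \int_1^{\infty} u^{-1/4} e^{-t (u^{3/2} - 1/t)^2}\,du \to \frac{2\sqrt{\pi}}{3}. -/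
open Filter Topology MeasureTheory Set

private lemma gil_image_eq (t : ℝ) (ht : 0 < t) :
    (fun u : ℝ => Real.sqrt t * u ^ ((3:ℝ)/2) - 1/Real.sqrt t) '' Ioi 1
      = Ioi (Real.sqrt t - 1/Real.sqrt t) := by
  set s := Real.sqrt t with hs_def
  have hs : 0 < s := Real.sqrt_pos.mpr ht
  have hst : s * s = t := Real.mul_self_sqrt ht.le
  ext w
  simp only [mem_image, mem_Ioi]
  constructor
  · rintro ⟨u, hu, rfl⟩
    have h1 : (1:ℝ) < u ^ ((3:ℝ)/2) :=
      (Real.one_lt_rpow_iff_of_pos (lt_trans one_pos hu)).mpr (Or.inl ⟨hu, by norm_num⟩)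
    have h2 : s * 1 < s * u ^ ((3:ℝ)/2) := (mul_lt_mul_iff_right₀ hs).mpr h1
    linarith
  · intro hw
    have hw' : s * s - 1 < w * s := by
      have h := mul_lt_mul_of_pos_right hw hs
      rwa [sub_mul, div_mul_cancel₀ _ hs.ne'] at h
    have hx : (1:ℝ) < (1 + w * s) / t := by
      rw [lt_div_iff₀ ht]; linarith [hst]
    have hx0 : (0:ℝ) < (1 + w * s) / t := lt_trans one_pos hx
    refine ⟨((1 + w * s) / t) ^ ((2:ℝ)/3), ?_, ?_⟩
    · exact (Real.one_lt_rpow_iff_of_pos hx0).mpr (Or.inl ⟨hx, by norm_num⟩)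
    · rw [← Real.rpow_mul hx0.le]
      norm_num
      rw [← hst]
      field_simp
      ring

private lemma gil_subst_eq (t : ℝ) (ht : 0 < t) :
    (∫ u in Ioi (1:ℝ), u ^ (-(1/4) : ℝ) * Real.exp (-t * (u ^ ((3:ℝ)/2) - 1/t) ^ 2))
      = ∫ w in Ioi (Real.sqrt t - 1/Real.sqrt t),
          (2/3) * (1 + w * Real.sqrt t) ^ (-(1/2) : ℝ) * Real.exp (-w^2) := by
  set s := Real.sqrt t with hs_def
  have hs : 0 < s := Real.sqrt_pos.mpr ht
  have hst : s * s = t := Real.mul_self_sqrt ht.le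
  have himg := gil_image_eq t ht
  rw [← himg, MeasureTheory.integral_image_eq_integral_abs_deriv_smul measurableSet_Ioi
    (f' := fun u => s * ((3:ℝ)/2 * u ^ ((1:ℝ)/2))) ?hderiv ?hinj]
  case hderiv =>
    intro u hu
    have hu1 : (1:ℝ) < u := hu
    have h := (Real.hasDerivAt_rpow_const (x := u) (p := (3:ℝ)/2)
      (Or.inl (by positivity))).const_mul s
    have he : (3:ℝ)/2 - 1 = 1/2 := by norm_num
    rw [he] at h
    exact ((h.sub_const (1/s)).hasDerivWithinAt)
  case hinj =>
    intro a ha b hb hab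
    have ha0 : (0:ℝ) ≤ a := le_of_lt (lt_trans one_pos ha)
    have hb0 : (0:ℝ) ≤ b := le_of_lt (lt_trans one_pos hb)
    have h : a ^ ((3:ℝ)/2) = b ^ ((3:ℝ)/2) := by
      have := hab
      simp only at this
      nlinarith [this]
    exact Real.rpow_left_injOn (by norm_num : ((3:ℝ)/2) ≠ 0) ha0 hb0 h
  · refine setIntegral_congr_fun measurableSet_Ioi fun u hu => ?_
    have hu1 : (1:ℝ) < u := hu
    have hu0 : (0:ℝ) < u := lt_trans one_pos hu1
    have hx : 1 + (s * u ^ ((3:ℝ)/2) - 1/s) * s = t * u ^ ((3:ℝ)/2) := by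
      rw [← hst]; field_simp; ring
    rw [smul_eq_mul, hx]
    have hup : (0:ℝ) < u ^ ((3:ℝ)/2) := Real.rpow_pos_of_pos hu0 _
    have h1 : (t * u ^ ((3:ℝ)/2)) ^ (-(1/2):ℝ)
        = t ^ (-(1/2):ℝ) * u ^ (-(3/4):ℝ) := by
      rw [Real.mul_rpow ht.le hup.le, ← Real.rpow_mul hu0.le]
      norm_num
    have h2 : |s * ((3:ℝ)/2 * u ^ ((1:ℝ)/2))| = s * ((3:ℝ)/2 * u ^ ((1:ℝ)/2)) := by
      rw [abs_of_pos]; positivity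
    have h3 : t ^ (-(1/2):ℝ) = 1/s := by
      rw [Real.rpow_neg ht.le, one_div, hs_def, Real.sqrt_eq_rpow]
      norm_num
    have h4 : (s * u ^ ((3:ℝ)/2) - 1/s) ^ 2 = t * (u ^ ((3:ℝ)/2) - 1/t) ^ 2 := by
      rw [← hst]; field_simp
    rw [h2, h1, h3]
    have h5 : -(s * u ^ ((3:ℝ)/2) - 1/s) ^ 2 = -t * (u ^ ((3:ℝ)/2) - 1/t) ^ 2 := by
      rw [h4]; ring
    rw [h5]
    have h6 : u ^ ((1:ℝ)/2) * u ^ (-(3/4):ℝ) = u ^ (-(1/4):ℝ) := by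
      rw [← Real.rpow_add hu0]; norm_num
    rw [← h6]
    field_simp

private lemma gil_key_lb {s w : ℝ} (hs : 0 < s) (hw : s - 1/s < w) :
    (1 + |w|)^(-2 : ℝ) ≤ 1 + w * s := by
  have hb : (0:ℝ) < 1 + |w| := by positivity
  have h1 : (1 + |w|)^(-2:ℝ) = 1 / (1 + |w|)^2 := by
    rw [Real.rpow_neg hb.le, one_div]
    congr 1
    rw [show ((2:ℝ)) = ((2:ℕ):ℝ) by norm_num, Real.rpow_natCast]
  rw [h1, div_le_iff₀ (by positivity)]
  have hw' : s * s - 1 < w * s := by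
    have h := mul_lt_mul_of_pos_right hw hs
    rwa [sub_mul, div_mul_cancel₀ _ hs.ne'] at h
  rcases le_or_gt 0 w with hw0 | hw0
  · rw [abs_of_nonneg hw0]
    nlinarith [mul_nonneg hw0 hs.le]
  · rw [abs_of_neg hw0]
    by_contra hcon
    push_neg at hcon
    set a := -w with ha
    have ha0 : 0 < a := by simpa [ha] using hw0
    have k1 : s * s < 1 - a * s := by nlinarith
    have k2 : (1 - a * s) * (1 + a)^2 < 1 := by nlinarith
    have k3 : (s * (1 + a))^2 < 1 := by nlinarith [sq_nonneg (1+a)]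
    have k4 : s * (1 + a) < 1 := by nlinarith [sq_nonneg (s*(1+a) - 1), sq_nonneg (s*(1+a)+1)]
    have k5 : a * s * (1 + a)^2 > a * (a + 2) := by nlinarith
    have k6 : s * (1 + a)^2 > a + 2 := by
      rcases lt_or_ge (s * (1+a)^2) (a+2) with h | h
      · exfalso; nlinarith
      · rcases eq_or_lt_of_le h with h' | h'
        · exfalso; nlinarith
        · exact h'
    nlinarith [sq_nonneg (1+a)]

/-- As `t → 0⁺`, `∫_1^∞ u^{-1/4} e^{-t(u^{3/2} - 1/t)²} du → 2√π/3`. -/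
theorem gaussian_like_integral_limit :
    Tendsto (fun t : ℝ =>
        ∫ u in Ioi (1:ℝ), u ^ (-(1/4) : ℝ) * Real.exp (-t * (u ^ ((3:ℝ)/2) - 1/t) ^ 2))
      (𝓝[>] (0:ℝ)) (𝓝 (2 * Real.sqrt Real.pi / 3)) := by
  set F : ℝ → ℝ → ℝ := fun t w =>
    (Ioi (Real.sqrt t - 1/Real.sqrt t)).indicator
      (fun w => (2/3) * (1 + w * Real.sqrt t) ^ (-(1/2) : ℝ) * Real.exp (-w^2)) w with hF
  have key : Tendsto (fun t => ∫ w, F t w) (𝓝[>] (0:ℝ))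
      (𝓝 (∫ w : ℝ, (2/3) * Real.exp (-w^2))) := by
    apply MeasureTheory.tendsto_integral_filter_of_dominated_convergence
      (bound := fun w => Real.exp (1/2) * Real.exp (-(1/2) * w^2))
    · -- a.e. strong measurability
      filter_upwards [self_mem_nhdsWithin] with t ht
      apply Measurable.aestronglyMeasurable
      apply Measurable.indicator _ measurableSet_Ioi
      measurability
    · -- domination
      filter_upwards [self_mem_nhdsWithin] with t ht
      have hs : 0 < Real.sqrt t := Real.sqrt_pos.mpr ht
      refine Filter.Eventually.of_forall fun w => ?_
      rw [hF]
      by_cases hw : w ∈ Ioi (Real.sqrt t - 1/Real.sqrt t)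
      · simp only [indicator_of_mem hw]
        have hlb := gil_key_lb hs hw
        have hb : (0:ℝ) < 1 + |w| := by positivity
        have hlb0 : (0:ℝ) < (1 + |w|)^(-2:ℝ) := Real.rpow_pos_of_pos hb _
        have h1 : (1 + w * Real.sqrt t) ^ (-(1/2):ℝ) ≤ ((1 + |w|)^(-2:ℝ)) ^ (-(1/2):ℝ) :=
          Real.rpow_le_rpow_of_nonpos hlb0 hlb (by norm_num)
        have h2 : ((1 + |w|)^(-2:ℝ)) ^ (-(1/2):ℝ) = 1 + |w| := by
          rw [← Real.rpow_mul hb.le]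
          norm_num
        have h3 : (0:ℝ) < 1 + w * Real.sqrt t := lt_of_lt_of_le hlb0 hlb
        have h4 : (1 + w * Real.sqrt t) ^ (-(1/2):ℝ) > 0 := Real.rpow_pos_of_pos h3 _
        rw [Real.norm_eq_abs, abs_of_nonneg (by positivity)]
        have h5 : (2/3 : ℝ) * (1 + w * Real.sqrt t) ^ (-(1/2):ℝ) * Real.exp (-w^2)
            ≤ (1 + |w|) * Real.exp (-w^2) := by
          have := h1.trans_eq h2
          nlinarith [Real.exp_pos (-w^2), h4]
        refine h5.trans ?_
        have h6 : 1 + |w| ≤ Real.exp |w| := by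
          have := Real.add_one_le_exp |w|
          linarith
        calc (1 + |w|) * Real.exp (-w^2) ≤ Real.exp |w| * Real.exp (-w^2) := by
              exact mul_le_mul_of_nonneg_right h6 (Real.exp_pos _).le
          _ = Real.exp (|w| + -w^2) := (Real.exp_add _ _).symm
          _ ≤ Real.exp (1/2 + -(1/2) * w^2) := by
              apply Real.exp_le_exp.mpr
              nlinarith [sq_nonneg (|w| - 1), sq_abs w]
          _ = Real.exp (1/2) * Real.exp (-(1/2) * w^2) := Real.exp_add _ _
      · simp only [indicator_of_notMem hw, norm_zero]
        positivity
    · -- integrability of bound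
      exact (integrable_exp_neg_mul_sq (by norm_num : (0:ℝ) < 1/2)).const_mul _
    · -- pointwise limit
      refine Filter.Eventually.of_forall fun w => ?_
      have hev : ∀ᶠ t in 𝓝[>] (0:ℝ),
          F t w = (2/3) * (1 + w * Real.sqrt t) ^ (-(1/2) : ℝ) * Real.exp (-w^2) := by
        have hδ : (0:ℝ) < (1/(1+|w|))^2 := by positivity
        filter_upwards [Ioo_mem_nhdsGT_of_mem (left_mem_Ico.mpr (lt_min one_pos hδ))]
          with t ht
        obtain ⟨ht0, ht1⟩ := ht
        have hs : 0 < Real.sqrt t := Real.sqrt_pos.mpr ht0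
        have hmem : w ∈ Ioi (Real.sqrt t - 1/Real.sqrt t) := by
          have hs1 : Real.sqrt t ≤ 1 := by
            rw [show (1:ℝ) = Real.sqrt 1 by simp]
            exact Real.sqrt_le_sqrt (le_of_lt (lt_of_lt_of_le ht1 (min_le_left _ _)))
          have hs2 : Real.sqrt t < 1/(1+|w|) := by
            have h := lt_of_lt_of_le ht1 (min_le_right _ _)
            have : Real.sqrt t < Real.sqrt ((1/(1+|w|))^2) := by
              exact (Real.sqrt_lt_sqrt ht0.le h)
            rwa [Real.sqrt_sq (by positivity)] at this
          have hinv : 1 + |w| < 1/Real.sqrt t := by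
            rw [lt_div_iff₀ hs]
            have hb : (0:ℝ) < 1 + |w| := by positivity
            calc (1 + |w|) * Real.sqrt t < (1 + |w|) * (1/(1+|w|)) :=
                  (mul_lt_mul_iff_right₀ hb).mpr hs2
              _ = 1 := by field_simp
          simp only [mem_Ioi]
          have : -|w| ≤ w := neg_abs_le w
          nlinarith [hs1]
        exact Set.indicator_of_mem hmem _
      rw [show ((2:ℝ)/3) * Real.exp (-w^2)
          = (2/3) * (1 + w * 0) ^ (-(1/2) : ℝ) * Real.exp (-w^2) by
        norm_num]
      apply Tendsto.congr' (hev.mono fun t h => h.symm)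
      have h1 : Tendsto (fun t : ℝ => Real.sqrt t) (𝓝[>] (0:ℝ)) (𝓝 0) := by
        have := (Real.continuous_sqrt.tendsto 0)
        rw [Real.sqrt_zero] at this
        exact this.mono_left nhdsWithin_le_nhds
      have h2 : Tendsto (fun t : ℝ => 1 + w * Real.sqrt t) (𝓝[>] (0:ℝ)) (𝓝 (1 + w * 0)) :=
        (tendsto_const_nhds.add ((tendsto_const_nhds.mul h1)))
      have h3 : ContinuousAt (fun x : ℝ => x ^ (-(1/2) : ℝ)) (1 + w * 0) := by
        apply Real.continuousAt_rpow_const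
        norm_num
      exact ((h3.tendsto.comp h2).const_mul _).mul_const _
  have heq : ∀ᶠ t in 𝓝[>] (0:ℝ),
      (∫ u in Ioi (1:ℝ), u ^ (-(1/4) : ℝ) * Real.exp (-t * (u ^ ((3:ℝ)/2) - 1/t) ^ 2))
        = ∫ w, F t w := by
    filter_upwards [self_mem_nhdsWithin] with t ht
    rw [gil_subst_eq t ht, hF, MeasureTheory.integral_indicator measurableSet_Ioi]
  have hval : (∫ w : ℝ, (2/3) * Real.exp (-w^2)) = 2 * Real.sqrt Real.pi / 3 := by
    rw [MeasureTheory.integral_const_mul]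
    have : (∫ w : ℝ, Real.exp (-w^2)) = Real.sqrt Real.pi := by
      have h := integral_gaussian (1:ℝ)
      simp only [one_mul, neg_mul] at h
      rw [show Real.pi / 1 = Real.pi by ring] at h
      convert h using 2
    rw [this]; ring
  rw [← hval]
  exact Tendsto.congr' (heq.mono fun t h => h.symm) key
end

section
/- As t \to 0^+, the quotient \frac{\sum_{m \ge 1} m^{-1/4} e^{2 m^{3/2} - (m+1)^3 t}}{\sum_{m \ge 1} m^{-1/4} e^{2 m^{3/2} - m^3 t}} tends to 0. -/
/-!
With `w(x) = x^(-1/4) e^(2x^(3/2))` the denominator is `D(t) = ∑ w(n) e^(-n³t)` and the numerator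
is `∑ (w(n) / w(n+1)) · w(n+1) e^(-(n+1)³t)`: a reweighting of the terms of `D` by factors
`w(n) / w(n+1) ≤ 2^(1/4) e^(-2√n)` that tend to `0`. Each term of `D` is at most its value at
`t = 0`, while `D(t) → ∞` as `t → 0⁺` because `w ≥ 1` is not summable. So the finitely many
factors above `ε` contribute a bounded amount and the others at most `ε D(t)`.
-/

open Filter Topology Asymptotics Finset Real

theorem isLittleO_tsum_mul_of_tendsto_zero {α : Type*} {l : Filter α} {a : α → ℕ → ℝ}
    {r B : ℕ → ℝ} (hr : Tendsto r atTop (𝓝 0)) (ha : ∀ t n, 0 ≤ a t n)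
    (hsum : ∀ᶠ t in l, Summable (a t)) (hB : ∀ᶠ t in l, ∀ n, a t n ≤ B n)
    (htop : Tendsto (fun t => ∑' n, a t n) l atTop) :
    (fun t => ∑' n, r n * a t n) =o[l] fun t => ∑' n, a t n := by
  refine IsLittleO.of_bound fun ε hε => ?_
  have hr' : Tendsto (fun n => ‖r n‖) atTop (𝓝 0) := by simpa using hr.norm
  obtain ⟨M, hM⟩ := eventually_atTop.1 (hr'.eventually (eventually_le_nhds (half_pos hε)))
  set K := ∑ n ∈ range M, ‖r n‖ * B n
  filter_upwards [hsum, hB, htop.eventually_ge_atTop (2 * K / ε)] with t hsumt hBt hKt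
  have htail n : ‖r (n + M) * a t (n + M)‖ ≤ ε / 2 * a t (n + M) := by
    rw [norm_mul, Real.norm_of_nonneg (ha t _)]
    exact mul_le_mul_of_nonneg_right (hM _ (Nat.le_add_left M n)) (ha t _)
  have hshift : Summable fun n => a t (n + M) := (summable_nat_add_iff M).2 hsumt
  have hnorm : Summable fun n => ‖r n * a t n‖ :=
    (summable_nat_add_iff M).1 <|
      Summable.of_nonneg_of_le (fun _ => norm_nonneg _) htail (hshift.mul_left _)
  have hK : K ≤ ε / 2 * ∑' n, a t n := by
    rw [div_le_iff₀ hε] at hKt; linarith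
  calc ‖∑' n, r n * a t n‖ ≤ ∑' n, ‖r n * a t n‖ := norm_tsum_le_tsum_norm hnorm
    _ = ∑ n ∈ range M, ‖r n * a t n‖ + ∑' n, ‖r (n + M) * a t (n + M)‖ :=
      (hnorm.sum_add_tsum_nat_add M).symm
    _ ≤ K + ∑' n, ε / 2 * a t (n + M) := by
      refine add_le_add (sum_le_sum fun n _ => ?_) ?_
      · rw [norm_mul, Real.norm_of_nonneg (ha t n)]
        exact mul_le_mul_of_nonneg_left (hBt n) (norm_nonneg _)
      · exact (hnorm.comp_injective (add_left_injective M)).tsum_le_tsum htail (hshift.mul_left _)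
    _ ≤ K + ε / 2 * ∑' n, a t n := by
      rw [tsum_mul_left]
      gcongr K + ε / 2 * ?_
      exact tsum_comp_le_tsum_of_inj hsumt (ha t) (add_left_injective M)
    _ ≤ ε * ‖∑' n, a t n‖ := by
      rw [Real.norm_of_nonneg (tsum_nonneg (ha t))]; linarith

theorem tendsto_tsum_atTop_of_not_summable {α : Type*} {l : Filter α} [l.NeBot]
    {a : α → ℕ → ℝ} {b : ℕ → ℝ} (ha : ∀ t n, 0 ≤ a t n) (hsum : ∀ᶠ t in l, Summable (a t))
    (hlim : ∀ n, Tendsto (fun t => a t n) l (𝓝 (b n))) (hb : ¬Summable b) :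
    Tendsto (fun t => ∑' n, a t n) l atTop := by
  have hb0 n : 0 ≤ b n := ge_of_tendsto' (hlim n) (ha · n)
  refine tendsto_atTop.2 fun C => ?_
  obtain ⟨N, hN⟩ :=
    (((not_summable_iff_tendsto_nat_atTop_of_nonneg hb0).1 hb).eventually_gt_atTop C).exists
  have hpartial : Tendsto (fun t => ∑ n ∈ range N, a t n) l (𝓝 (∑ n ∈ range N, b n)) :=
    tendsto_finsetSum _ fun n _ => hlim n
  filter_upwards [hpartial.eventually (eventually_gt_nhds hN), hsum] with t hCt hsumt
  exact hCt.le.trans (hsumt.sum_le_tsum _ fun n _ => ha t n)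

noncomputable def weight (x : ℝ) : ℝ := x ^ (-(1 / 4) : ℝ) * exp (2 * x ^ ((3 : ℝ) / 2))

noncomputable def dampedWeight (t : ℝ) (n : ℕ) : ℝ :=
  weight (n + 1) * exp (-(((n : ℝ) + 1) ^ 3 * t))

lemma weight_pos {x : ℝ} (hx : 0 < x) : 0 < weight x := by
  unfold weight; positivity

lemma rpow_three_halves_eq_mul_sqrt {x : ℝ} (hx : 0 ≤ x) : x ^ ((3 : ℝ) / 2) = x * √x := by
  rw [show (3 : ℝ) / 2 = 1 + 1 / 2 by norm_num, rpow_add' hx (by norm_num), rpow_one,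
    sqrt_eq_rpow]

lemma rpow_three_halves_sq {x : ℝ} (hx : 0 ≤ x) : (x ^ ((3 : ℝ) / 2)) ^ 2 = x ^ 3 := by
  rw [← rpow_mul_natCast hx]; norm_num

lemma one_le_weight {x : ℝ} (hx : 1 ≤ x) : 1 ≤ weight x := by
  have hx0 : 0 < x := by linarith
  rw [weight, rpow_neg hx0.le, inv_mul_eq_div, one_le_div (by positivity)]
  calc x ^ (1 / 4 : ℝ) ≤ x ^ ((3 : ℝ) / 2) := rpow_le_rpow_of_exponent_le hx (by norm_num)
    _ ≤ 2 * x ^ ((3 : ℝ) / 2) + 1 := by linarith [rpow_nonneg hx0.le ((3 : ℝ) / 2)]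
    _ ≤ exp (2 * x ^ ((3 : ℝ) / 2)) := add_one_le_exp _

lemma rpow_three_halves_add_sqrt_le {x : ℝ} (hx : 0 ≤ x) :
    x ^ ((3 : ℝ) / 2) + √x ≤ (x + 1) ^ ((3 : ℝ) / 2) := by
  rw [rpow_three_halves_eq_mul_sqrt hx, rpow_three_halves_eq_mul_sqrt (by linarith)]
  nlinarith [sqrt_le_sqrt (by linarith : x ≤ x + 1), sqrt_nonneg x]

lemma rpow_neg_quarter_le_mul_add_one {x : ℝ} (hx : 1 ≤ x) :
    x ^ (-(1 / 4) : ℝ) ≤ 2 ^ (1 / 4 : ℝ) * (x + 1) ^ (-(1 / 4) : ℝ) := by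
  have hx0 : 0 < x := by linarith
  calc x ^ (-(1 / 4) : ℝ) = 2 ^ (1 / 4 : ℝ) * (2 * x) ^ (-(1 / 4) : ℝ) := by
        rw [mul_rpow zero_le_two hx0.le, ← mul_assoc, ← rpow_add zero_lt_two]; norm_num
    _ ≤ 2 ^ (1 / 4 : ℝ) * (x + 1) ^ (-(1 / 4) : ℝ) := by
        gcongr 2 ^ (1 / 4 : ℝ) * ?_
        exact rpow_le_rpow_of_nonpos (by linarith) (by linarith) (by norm_num)

lemma weight_div_weight_add_one_le {x : ℝ} (hx : 1 ≤ x) :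
    weight x / weight (x + 1) ≤ 2 ^ (1 / 4 : ℝ) * exp (-(2 * √x)) := by
  have hx0 : 0 < x := by linarith
  rw [div_le_iff₀ (weight_pos (by linarith)), weight, weight]
  calc x ^ (-(1 / 4) : ℝ) * exp (2 * x ^ ((3 : ℝ) / 2))
      ≤ (2 ^ (1 / 4 : ℝ) * (x + 1) ^ (-(1 / 4) : ℝ)) *
          (exp (-(2 * √x)) * exp (2 * (x + 1) ^ ((3 : ℝ) / 2))) := by
        rw [← exp_add]
        gcongr
        · exact rpow_neg_quarter_le_mul_add_one hx
        · linarith [rpow_three_halves_add_sqrt_le hx0.le]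
    _ = _ := by ring

lemma tendsto_weight_div_weight_add_one :
    Tendsto (fun x => weight x / weight (x + 1)) atTop (𝓝 0) := by
  have hbound : Tendsto (fun x => 2 ^ (1 / 4 : ℝ) * exp (-(2 * √x))) atTop (𝓝 0) := by
    simpa using ((tendsto_exp_atBot.comp (tendsto_neg_atTop_atBot.comp
      (tendsto_sqrt_atTop.const_mul_atTop two_pos))).const_mul (2 ^ (1 / 4 : ℝ)))
  refine tendsto_of_tendsto_of_tendsto_of_le_of_le' tendsto_const_nhds hbound ?_ ?_
  · filter_upwards [eventually_gt_atTop 0] with x hx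
    exact (div_pos (weight_pos hx) (weight_pos (by linarith))).le
  · filter_upwards [eventually_ge_atTop 1] with x hx
    exact weight_div_weight_add_one_le hx

lemma dampedWeight_nonneg (t : ℝ) (n : ℕ) : 0 ≤ dampedWeight t n :=
  mul_nonneg (weight_pos (by positivity)).le (exp_pos _).le

lemma dampedWeight_le_weight {t : ℝ} (ht : 0 ≤ t) (n : ℕ) : dampedWeight t n ≤ weight (n + 1) :=
  mul_le_of_le_one_right (weight_pos (by positivity)).le
    (exp_le_one_iff.2 (neg_nonpos.2 (by positivity)))

lemma dampedWeight_le_exp {t : ℝ} (ht : 0 < t) (n : ℕ) :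
    dampedWeight t n ≤ exp (2 / t) * exp (n * -(t / 2)) := by
  set x : ℝ := n + 1
  have hx : 1 ≤ x := by simp [x]
  set y := x ^ ((3 : ℝ) / 2)
  have hy : y ^ 2 = x ^ 3 := rpow_three_halves_sq (by linarith)
  -- completing the square: `2y - t y² / 2 ≤ 2 / t`
  have hsq : 0 ≤ t / 2 * (y - 2 / t) ^ 2 := by positivity
  have hexpand : t / 2 * (y - 2 / t) ^ 2 = t * y ^ 2 / 2 - 2 * y + 2 / t := by
    field_simp; ring
  have hxn : (n : ℝ) * t ≤ y ^ 2 * t := by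
    rw [hy]
    gcongr
    calc (n : ℝ) ≤ x := by simp [x]
      _ ≤ x ^ 3 := le_self_pow₀ hx (by norm_num)
  calc dampedWeight t n = x ^ (-(1 / 4) : ℝ) * exp (2 * y + -(y ^ 2 * t)) := by
        rw [hy, dampedWeight, weight, exp_add, mul_assoc]
    _ ≤ 1 * exp (2 / t + n * -(t / 2)) := by
        gcongr ?_ * exp ?_
        · exact rpow_le_one_of_one_le_of_nonpos hx (by norm_num)
        · linarith
    _ = exp (2 / t) * exp (n * -(t / 2)) := by rw [one_mul, exp_add]

lemma summable_dampedWeight {t : ℝ} (ht : 0 < t) : Summable (dampedWeight t) :=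
  Summable.of_nonneg_of_le (dampedWeight_nonneg t) (dampedWeight_le_exp ht)
    ((summable_exp_nat_mul_iff.2 (by linarith)).mul_left _)

lemma tendsto_dampedWeight (n : ℕ) :
    Tendsto (fun t => dampedWeight t n) (𝓝 0) (𝓝 (weight (n + 1))) := by
  have hcont : Continuous fun t => dampedWeight t n := by unfold dampedWeight; fun_prop
  simpa [dampedWeight] using hcont.tendsto 0

lemma not_summable_weight : ¬Summable fun n : ℕ => weight (n + 1) := fun h =>
  absurd (ge_of_tendsto' h.tendsto_atTop_zero fun n => one_le_weight (by simp)) (by norm_num)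

lemma tendsto_tsum_dampedWeight_succ :
    Tendsto (fun t => ∑' n, dampedWeight t (n + 1)) (𝓝[>] 0) atTop :=
  tendsto_tsum_atTop_of_not_summable (fun t n => dampedWeight_nonneg t (n + 1))
    (eventually_nhdsWithin_of_forall fun _ ht =>
      (summable_nat_add_iff 1).2 (summable_dampedWeight ht))
    (fun n => (tendsto_dampedWeight (n + 1)).mono_left nhdsWithin_le_nhds)
    fun h => not_summable_weight ((summable_nat_add_iff 1).1 h)

lemma tendsto_weight_div_weight_natCast :
    Tendsto (fun n : ℕ => weight (n + 1) / weight (n + 2)) atTop (𝓝 0) := by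
  have h := tendsto_weight_div_weight_add_one.comp
    (tendsto_atTop_add_const_right _ 1 tendsto_natCast_atTop_atTop)
  refine h.congr fun n => ?_
  simp only [Function.comp, add_assoc, one_add_one_eq_two]

lemma isLittleO_tsum_weight_div_weight_mul_dampedWeight :
    (fun t => ∑' n : ℕ, weight (n + 1) / weight (n + 2) * dampedWeight t (n + 1))
      =o[𝓝[>] 0] fun t => ∑' n, dampedWeight t n := by
  have hsum : ∀ᶠ t in 𝓝[>] (0 : ℝ), Summable (dampedWeight t) :=
    eventually_nhdsWithin_of_forall fun _ ht => summable_dampedWeight ht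
  refine (isLittleO_tsum_mul_of_tendsto_zero tendsto_weight_div_weight_natCast
    (fun t n => dampedWeight_nonneg t (n + 1)) (hsum.mono fun _ h => (summable_nat_add_iff 1).2 h)
    (eventually_nhdsWithin_of_forall fun _ ht n => dampedWeight_le_weight ht.le _)
    tendsto_tsum_dampedWeight_succ).trans_isBigO (IsBigO.of_bound 1 ?_)
  filter_upwards [hsum] with t ht
  rw [one_mul, Real.norm_of_nonneg (tsum_nonneg fun _ => dampedWeight_nonneg t _),
    Real.norm_of_nonneg (tsum_nonneg fun _ => dampedWeight_nonneg t _)]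
  exact tsum_comp_le_tsum_of_inj ht (dampedWeight_nonneg t) (add_left_injective 1)

lemma rpow_mul_exp_sub_eq (x z : ℝ) :
    x ^ (-(1 / 4) : ℝ) * exp (2 * x ^ ((3 : ℝ) / 2) - z) = weight x * exp (-z) := by
  rw [sub_eq_add_neg, exp_add, weight, mul_assoc]

lemma weight_mul_exp_eq (t : ℝ) (n : ℕ) :
    weight (n + 1) * exp (-(((n : ℝ) + 2) ^ 3 * t)) =
      weight (n + 1) / weight (n + 2) * dampedWeight t (n + 1) := by
  have h : ((n + 1 : ℕ) : ℝ) + 1 = n + 2 := by push_cast; ring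
  have hw : weight (n + 2) ≠ 0 := (weight_pos (by positivity)).ne'
  rw [dampedWeight, h]
  field_simp

/-- As `t → 0⁺`, the quotient
`(∑_{m≥1} m^{-1/4} e^{2m^{3/2} - (m+1)³t}) / (∑_{m≥1} m^{-1/4} e^{2m^{3/2} - m³t})` tends to `0`. -/
theorem shifted_sum_quotient_tendsto_zero :
    Tendsto (fun t : ℝ =>
        (∑' m : ℕ, ((m:ℝ) + 1) ^ (-(1/4) : ℝ) *
            Real.exp (2 * ((m:ℝ) + 1) ^ ((3:ℝ)/2) - ((m:ℝ) + 2) ^ 3 * t)) /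
          (∑' m : ℕ, ((m:ℝ) + 1) ^ (-(1/4) : ℝ) *
            Real.exp (2 * ((m:ℝ) + 1) ^ ((3:ℝ)/2) - ((m:ℝ) + 1) ^ 3 * t)))
      (𝓝[>] (0:ℝ)) (𝓝 0) := by
  refine isLittleO_tsum_weight_div_weight_mul_dampedWeight.tendsto_div_nhds_zero.congr fun t => ?_
  simp only [rpow_mul_exp_sub_eq, weight_mul_exp_eq, dampedWeight]
end
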